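/- Let u : ℝ² → ℝ (or on a strip [0,1] × ℝ) be a bounded harmonic function on the infinite strip S = ℝ × (0,1), continuous up to the boundary, vanishing on both boundary lines ℝ × {0} and ℝ × {1}. Then u ≡ 0 on S. -/

import Mathlib

/-!
Compare `u` on the rectangle `[-R, R] × [0, 1]` with the harmonic barrier
`M (x² - y² + 1) / R²`, which dominates `u` on the rectangle's boundary; by the weak maximum
principle it dominates `u` inside, and letting `R → ∞` gives `u ≤ 0`. The same applied to `-u`
gives `u = 0`.
-/

/-- A function on `ℝ²` is harmonic on a set if it is `C²` there and its Laplacian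
(computed via second derivatives of the coordinate slices) vanishes. -/
def HarmonicOnStrip (u : ℝ × ℝ → ℝ) (S : Set (ℝ × ℝ)) : Prop :=
  ContDiffOn ℝ 2 u S ∧ ∀ p ∈ S,
    deriv (deriv fun x => u (x, p.2)) p.1 + deriv (deriv fun y => u (p.1, y)) p.2 = 0

open Set Filter Topology

noncomputable def planeLaplacian (f : ℝ × ℝ → ℝ) (p : ℝ × ℝ) : ℝ :=
  deriv (deriv fun x => f (x, p.2)) p.1 + deriv (deriv fun y => f (p.1, y)) p.2

/-- If `f'' a > 0`, the second derivative test makes `a` also a local minimum, so `f` is locally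
constant near `a` and `f'' a = 0`. -/
theorem deriv_deriv_nonpos_of_isLocalMax {f : ℝ → ℝ} {a : ℝ} (hmax : IsLocalMax f a)
    (hc : ContinuousAt f a) : deriv (deriv f) a ≤ 0 := by
  by_contra! hpos
  have hmin : IsLocalMin f a := isLocalMin_of_deriv_deriv_pos hpos hmax.deriv_eq_zero hc
  have hconst : f =ᶠ[𝓝 a] fun _ => f a := by
    filter_upwards [hmax, hmin] with x hx₁ hx₂ using le_antisymm hx₁ hx₂
  have hzero : deriv (deriv f) a = 0 := by
    rw [hconst.deriv.deriv_eq]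
    simp
  exact hpos.ne' hzero

theorem planeLaplacian_nonpos_of_isLocalMax {f : ℝ × ℝ → ℝ} {p : ℝ × ℝ} (hmax : IsLocalMax f p)
    (hc : ContinuousAt f p) : planeLaplacian f p ≤ 0 := by
  have hx : ContinuousAt (fun x : ℝ => (x, p.2)) p.1 := by fun_prop
  have hy : ContinuousAt (fun y : ℝ => (p.1, y)) p.2 := by fun_prop
  exact add_nonpos
    (deriv_deriv_nonpos_of_isLocalMax (hmax.comp_continuous hx) (hc.comp hx))
    (deriv_deriv_nonpos_of_isLocalMax (hmax.comp_continuous hy) (hc.comp hy))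

theorem planeLaplacian_neg (f : ℝ × ℝ → ℝ) (p : ℝ × ℝ) :
    planeLaplacian (-f) p = -planeLaplacian f p := by
  simp only [planeLaplacian, Pi.neg_apply, deriv.fun_neg', deriv.fun_neg]
  ring

section Slices

variable {f : ℝ × ℝ → ℝ} {p : ℝ × ℝ}

theorem ContDiffAt.fst_slice (hf : ContDiffAt ℝ 2 f p) : ContDiffAt ℝ 2 (fun x => f (x, p.2)) p.1 :=
  hf.comp p.1 (contDiffAt_id.prodMk contDiffAt_const)

theorem ContDiffAt.snd_slice (hf : ContDiffAt ℝ 2 f p) : ContDiffAt ℝ 2 (fun y => f (p.1, y)) p.2 :=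
  hf.comp p.2 (contDiffAt_const.prodMk contDiffAt_id)

end Slices

theorem planeLaplacian_add {f g : ℝ × ℝ → ℝ} {p : ℝ × ℝ} (hf : ContDiffAt ℝ 2 f p)
    (hg : ContDiffAt ℝ 2 g p) :
    planeLaplacian (f + g) p = planeLaplacian f p + planeLaplacian g p := by
  have hiter : ∀ h : ℝ → ℝ, deriv (deriv h) = iteratedDeriv 2 h := fun h => by
    rw [iteratedDeriv_succ, iteratedDeriv_one]
  simp only [planeLaplacian, Pi.add_apply, hiter, iteratedDeriv_fun_add hf.fst_slice hg.fst_slice,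
    iteratedDeriv_fun_add hf.snd_slice hg.snd_slice]
  ring

theorem planeLaplacian_sub {f g : ℝ × ℝ → ℝ} {p : ℝ × ℝ} (hf : ContDiffAt ℝ 2 f p)
    (hg : ContDiffAt ℝ 2 g p) :
    planeLaplacian (f - g) p = planeLaplacian f p - planeLaplacian g p := by
  have hg' : ContDiffAt ℝ 2 (-g) p := hg.neg
  rw [sub_eq_add_neg, planeLaplacian_add hf hg', planeLaplacian_neg, sub_eq_add_neg]

theorem planeLaplacian_const_mul_sq_add_sq (c : ℝ) (p : ℝ × ℝ) :
    planeLaplacian (fun q => c * (q.1 ^ 2 + q.2 ^ 2)) p = 4 * c := by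
  simp [planeLaplacian]
  ring

theorem exists_mem_frontier_isMaxOn_of_planeLaplacian_pos {f : ℝ × ℝ → ℝ} {K : Set (ℝ × ℝ)}
    (hK : IsCompact K) (hne : K.Nonempty) (hcont : ContinuousOn f K)
    (hpos : ∀ p ∈ interior K, 0 < planeLaplacian f p) : ∃ z ∈ frontier K, IsMaxOn f K z := by
  obtain ⟨z, hzK, hzmax⟩ := hK.exists_isMaxOn hne hcont
  refine ⟨z, ⟨subset_closure hzK, fun hz => ?_⟩, hzmax⟩
  have hnhds : K ∈ 𝓝 z := mem_interior_iff_mem_nhds.1 hz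
  exact (hpos z hz).not_ge <|
    planeLaplacian_nonpos_of_isLocalMax (hzmax.isLocalMax hnhds) (hcont.continuousAt hnhds)

/-- Perturbing `f` by `δ (x² + y²)` makes its Laplacian positive, so the perturbation attains its
maximum on the frontier; then let `δ → 0`. -/
theorem le_of_forall_mem_frontier_le_of_planeLaplacian_nonneg {f : ℝ × ℝ → ℝ}
    {K : Set (ℝ × ℝ)} {m : ℝ} (hK : IsCompact K) (hcont : ContinuousOn f K)
    (hf : ContDiffOn ℝ 2 f (interior K)) (hsub : ∀ p ∈ interior K, 0 ≤ planeLaplacian f p)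
    (hfr : ∀ p ∈ frontier K, f p ≤ m) : ∀ p ∈ K, f p ≤ m := by
  set normSq : ℝ × ℝ → ℝ := fun q => q.1 ^ 2 + q.2 ^ 2
  obtain ⟨C, hC⟩ := hK.exists_bound_of_continuousOn (f := normSq) (by fun_prop)
  have hnormSq : ∀ q ∈ K, 0 ≤ normSq q ∧ normSq q ≤ C := fun q hq =>
    have h0 : 0 ≤ normSq q := by positivity
    ⟨h0, (Real.norm_of_nonneg h0).symm.trans_le (hC q hq)⟩
  intro p hp
  have hperturbed : ∀ δ > 0, f p ≤ m + δ * C := by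
    intro δ hδ
    set w : ℝ × ℝ → ℝ := f + fun q => δ * normSq q
    have hw : ∀ q ∈ interior K, 0 < planeLaplacian w q := by
      intro q hq
      have hfq : ContDiffAt ℝ 2 f q := hf.contDiffAt (isOpen_interior.mem_nhds hq)
      rw [planeLaplacian_add hfq (by fun_prop), planeLaplacian_const_mul_sq_add_sq]
      linarith [hsub q hq]
    obtain ⟨z, hz, hzmax⟩ := exists_mem_frontier_isMaxOn_of_planeLaplacian_pos hK ⟨p, hp⟩
      (hcont.add (by fun_prop)) hw
    have hzK : z ∈ K := hK.isClosed.frontier_subset hz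
    have hwp := isMaxOn_iff.1 hzmax p hp
    simp only [Pi.add_apply] at hwp
    nlinarith [hfr z hz, hnormSq p hp, hnormSq z hzK]
  have hlim : Tendsto (fun δ => m + δ * C) (𝓝[>] 0) (𝓝 m) :=
    tendsto_nhdsWithin_of_tendsto_nhds <| Continuous.tendsto' (by fun_prop) 0 m (by simp)
  exact ge_of_tendsto hlim (eventually_nhdsWithin_of_forall hperturbed)

theorem HarmonicOnStrip.neg {u : ℝ × ℝ → ℝ} {S : Set (ℝ × ℝ)} (h : HarmonicOnStrip u S) :
    HarmonicOnStrip (-u) S :=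
  ⟨h.1.neg, fun p hp => by
    change planeLaplacian (-u) p = 0
    rw [planeLaplacian_neg, show planeLaplacian u p = 0 from h.2 p hp, neg_zero]⟩

def unitStrip : Set (ℝ × ℝ) := {p | p.2 ∈ Ioo 0 1}

theorem isOpen_unitStrip : IsOpen unitStrip := isOpen_Ioo.preimage continuous_snd

theorem closure_unitStrip : closure unitStrip = {p | p.2 ∈ Icc 0 1} := by
  change closure (Prod.snd ⁻¹' Ioo 0 1) = Prod.snd ⁻¹' Icc 0 1
  rw [← isOpenMap_snd.preimage_closure_eq_closure_preimage continuous_snd, closure_Ioo zero_ne_one]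

/-- The barrier `M (x² - y² + 1) / R²` is harmonic, nonnegative on the lines `y = 0, 1` and at least
`M` on the sides `|x| = R` of the rectangle. -/
theorem le_barrier_of_harmonicOnStrip {u : ℝ × ℝ → ℝ} {M R : ℝ}
    (hharm : HarmonicOnStrip u unitStrip) (hbdd : ∀ p ∈ unitStrip, u p ≤ M)
    (hcont : ContinuousOn u (closure unitStrip)) (hbdry : ∀ x : ℝ, u (x, 0) = 0 ∧ u (x, 1) = 0)
    (hM : 0 ≤ M) (hR : 0 < R) {p : ℝ × ℝ} (hp : p ∈ Icc (-R) R ×ˢ Icc 0 1) :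
    u p ≤ M / R ^ 2 * (p.1 ^ 2 - p.2 ^ 2 + 1) := by
  set K : Set (ℝ × ℝ) := Icc (-R) R ×ˢ Icc 0 1
  set v : ℝ × ℝ → ℝ := fun q => M / R ^ 2 * (q.1 ^ 2 - q.2 ^ 2 + 1)
  have hK : K ⊆ closure unitStrip := by rw [closure_unitStrip]; exact fun q hq => hq.2
  have hintK : interior K ⊆ unitStrip := by
    rw [interior_prod_eq, interior_Icc, interior_Icc]; exact fun q hq => hq.2
  have hzero : ∀ q : ℝ × ℝ, q.2 = 0 ∨ q.2 = 1 → u q = 0 := by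
    rintro ⟨x, y⟩ (rfl | rfl)
    exacts [(hbdry x).1, (hbdry x).2]
  have hle : ∀ q ∈ K, u q ≤ M := by
    intro q hq
    by_cases hq2 : q.2 = 0 ∨ q.2 = 1
    · exact (hzero q hq2).trans_le hM
    · rw [not_or] at hq2
      exact hbdd q ⟨hq.2.1.lt_of_ne' hq2.1, hq.2.2.lt_of_ne hq2.2⟩
  have hMR : 0 ≤ M / R ^ 2 := by positivity
  refine sub_nonpos.1 <| le_of_forall_mem_frontier_le_of_planeLaplacian_nonneg (f := u - v)
    (isCompact_Icc.prod isCompact_Icc) ((hcont.mono hK).sub (by fun_prop))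
    ((hharm.1.mono hintK).sub (by fun_prop)) (fun q hq => ?_) (fun q hq => ?_) p hp
  · have hu : ContDiffAt ℝ 2 u q := hharm.1.contDiffAt (isOpen_unitStrip.mem_nhds (hintK hq))
    rw [planeLaplacian_sub hu (by fun_prop), show planeLaplacian u q = 0 from hharm.2 q (hintK hq)]
    simp [v, planeLaplacian]
  · have hqK : q ∈ K := (isCompact_Icc.prod isCompact_Icc).isClosed.frontier_subset hq
    rw [frontier_prod_eq, frontier_Icc (by linarith : -R ≤ R), frontier_Icc (zero_le_one' ℝ)] at hq
    have hq2 : q.2 ^ 2 ≤ 1 := by nlinarith [hqK.2.1, hqK.2.2]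
    rcases hq with ⟨-, hq2'⟩ | ⟨hq1, -⟩
    · rw [Pi.sub_apply, hzero q hq2']
      simp only [v]
      nlinarith [sq_nonneg q.1]
    · have hq1 : q.1 ^ 2 = R ^ 2 := by
        obtain h | h : q.1 = -R ∨ q.1 = R := hq1 <;> simp [h]
      simp only [Pi.sub_apply, v, hq1]
      have : M / R ^ 2 * R ^ 2 = M := div_mul_cancel₀ M (by positivity)
      nlinarith [hle q hqK]

theorem nonpos_of_harmonicOnStrip {u : ℝ × ℝ → ℝ} {M : ℝ}
    (hharm : HarmonicOnStrip u unitStrip) (hbdd : ∀ p ∈ unitStrip, u p ≤ M)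
    (hcont : ContinuousOn u (closure unitStrip)) (hbdry : ∀ x : ℝ, u (x, 0) = 0 ∧ u (x, 1) = 0)
    (hM : 0 ≤ M) {p : ℝ × ℝ} (hp : p ∈ unitStrip) : u p ≤ 0 := by
  have hlim : Tendsto (fun R : ℝ => M / R ^ 2 * (p.1 ^ 2 - p.2 ^ 2 + 1)) atTop (𝓝 0) := by
    simpa using ((tendsto_const_nhds (x := M)).div_atTop (tendsto_pow_atTop two_ne_zero)).mul_const
      (p.1 ^ 2 - p.2 ^ 2 + 1)
  refine ge_of_tendsto hlim ?_
  filter_upwards [eventually_ge_atTop (|p.1| + 1)] with R hR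
  have hpK : p ∈ Icc (-R) R ×ˢ Icc 0 1 :=
    ⟨abs_le.1 (by linarith), hp.1.le, hp.2.le⟩
  exact le_barrier_of_harmonicOnStrip hharm hbdd hcont hbdry hM (by linarith [abs_nonneg p.1]) hpK

theorem strip_liouville (u : ℝ × ℝ → ℝ) (M : ℝ)
    (S : Set (ℝ × ℝ)) (hS : S = {p : ℝ × ℝ | p.2 ∈ Set.Ioo (0 : ℝ) 1})
    (hharm : HarmonicOnStrip u S)
    (hbdd : ∀ p ∈ S, |u p| ≤ M)
    (hcont : ContinuousOn u (closure S))
    (hbdry : ∀ x : ℝ, u (x, 0) = 0 ∧ u (x, 1) = 0) :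
    ∀ p ∈ S, u p = 0 := by
  subst hS
  have hM : 0 ≤ M := (abs_nonneg _).trans (hbdd (0, 1 / 2) (by norm_num))
  intro p hp
  have hle : u p ≤ 0 := nonpos_of_harmonicOnStrip hharm
    (fun q hq => (abs_le.1 (hbdd q hq)).2) hcont hbdry hM hp
  have hge : -u p ≤ 0 := nonpos_of_harmonicOnStrip hharm.neg
    (fun q hq => neg_le.1 (abs_le.1 (hbdd q hq)).1) hcont.neg (fun x => by simp [hbdry]) hM hp
  linarith
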